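/- arXiv:2306.14048 — 7 statements merged into one kernel-verified Lean document; each statement's English description precedes it below -/
import Mathlib

section
/- Let f : 2^{[n]} → ℝ be a monotone submodular set function with f(∅) = 0, and let k ∈ ℕ. Let S_0 = ∅ and for t = 1,…,k let S_t = S_{t-1} ∪ {j_t} where j_t = argmax_{j ∈ [n] \ S_{t-1}} f(S_{t-1} ∪ {j}). Then the output set S_k of this greedy algorithm satisfies f(S_k) ≥ (1 − 1/e) · max_{T ⊆ [n], |T| = k} f(T). -/
/-- **Greedy algorithm for monotone submodular maximization (Nemhauser–Wolsey–Fisher).**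
Let `f : 2^[n] → ℝ` be a monotone submodular set function with `f ∅ = 0`, and `k ∈ ℕ`.
Starting from `S 0 = ∅`, at each step `t = 1, …, k` the greedy algorithm adds an element
`j ∉ S (t-1)` maximizing `f (S (t-1) ∪ {j})`.  Then the output set `S k` satisfies
`f (S k) ≥ (1 - 1/e) · max_{|T| = k} f T`. -/
theorem greedy_submodular_maximization
    (n k : ℕ) (f : Finset (Fin n) → ℝ)
    (hmono : ∀ A B : Finset (Fin n), A ⊆ B → f A ≤ f B)
    (hsub : ∀ A B : Finset (Fin n), A ⊆ B → ∀ i : Fin n, i ∉ B →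
      f (insert i B) - f B ≤ f (insert i A) - f A)
    (hempty : f ∅ = 0)
    (S : ℕ → Finset (Fin n)) (hS0 : S 0 = ∅)
    (hstep : ∀ t < k, ∃ j : Fin n, j ∉ S t ∧ S (t + 1) = insert j (S t) ∧
      ∀ j' : Fin n, j' ∉ S t → f (insert j' (S t)) ≤ f (insert j (S t))) :
    ∀ T : Finset (Fin n), T.card = k →
      (1 - (Real.exp 1)⁻¹) * f T ≤ f (S k) := by
  -- subadditivity of marginals
  have hA : ∀ B A : Finset (Fin n),
      f (A ∪ B) ≤ f A + ∑ j ∈ B \ A, (f (insert j A) - f A) := by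
    intro B
    induction B using Finset.induction_on with
    | empty => intro A; simp
    | @insert i B' hi ih =>
      intro A
      by_cases hiA : i ∈ A
      · have h1 : A ∪ insert i B' = A ∪ B' := by
          ext x; simp only [Finset.mem_union, Finset.mem_insert]
          constructor
          · rintro (h | (rfl | h)) <;> tauto
          · tauto
        have h2 : insert i B' \ A = B' \ A := by
          ext x; simp only [Finset.mem_sdiff, Finset.mem_insert]
          constructor
          · rintro ⟨rfl | h, h2⟩
            · exact absurd hiA h2
            · exact ⟨h, h2⟩
          · tauto
        rw [h1, h2]; exact ih A
      · have hiAB : i ∉ A ∪ B' := by simp [hiA, hi]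
        have h1 : A ∪ insert i B' = insert i (A ∪ B') := by
          rw [Finset.union_insert]
        have h2 : f (insert i (A ∪ B')) - f (A ∪ B') ≤ f (insert i A) - f A :=
          hsub A (A ∪ B') Finset.subset_union_left i hiAB
        have h3 : insert i B' \ A = insert i (B' \ A) := by
          ext x; simp only [Finset.mem_sdiff, Finset.mem_insert]
          constructor
          · rintro ⟨rfl | h, h2⟩
            · exact Or.inl rfl
            · exact Or.inr ⟨h, h2⟩
          · rintro (rfl | ⟨h, h2⟩)
            · exact ⟨Or.inl rfl, hiA⟩
            · exact ⟨Or.inr h, h2⟩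
        have h4 : i ∉ B' \ A := by simp [hi]
        rw [h1, h3, Finset.sum_insert h4]
        have := ih A
        linarith
  intro T hT
  rcases Nat.eq_zero_or_pos k with hk0 | hkpos
  · subst hk0
    have : T = ∅ := Finset.card_eq_zero.mp hT
    subst this
    rw [hS0, hempty]
    simp
  · have hk0 : (0:ℝ) < (k:ℝ) := by exact_mod_cast hkpos
    have hk1 : (1:ℝ) ≤ (k:ℝ) := by exact_mod_cast hkpos
    have hr0 : 0 ≤ 1 - 1/(k:ℝ) := by
      rw [sub_nonneg]
      exact (div_le_one hk0).mpr hk1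
    have hfT0 : 0 ≤ f T := by
      rw [← hempty]; exact hmono ∅ T (Finset.empty_subset _)
    -- one greedy step
    have hstep' : ∀ t < k,
        f T - f (S (t+1)) ≤ (1 - 1/(k:ℝ)) * (f T - f (S t)) := by
      intro t ht
      obtain ⟨j, hjS, hSt1, hjmax⟩ := hstep t ht
      have hmarg : 0 ≤ f (S (t+1)) - f (S t) := by
        rw [hSt1]
        have := hmono (S t) (insert j (S t)) (Finset.subset_insert _ _)
        linarith
      have h3 : ∑ j' ∈ T \ S t, (f (insert j' (S t)) - f (S t)) ≤
          ((T \ S t).card : ℝ) * (f (S (t+1)) - f (S t)) := by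
        have := Finset.sum_le_card_nsmul (T \ S t)
          (fun j' => f (insert j' (S t)) - f (S t)) (f (S (t+1)) - f (S t))
          (by
            intro x hx
            have hx' : x ∉ S t := (Finset.mem_sdiff.mp hx).2
            have := hjmax x hx'
            rw [hSt1]
            show f (insert x (S t)) - f (S t) ≤ f (insert j (S t)) - f (S t)
            linarith)
        simpa [nsmul_eq_mul] using this
      have h1 := hA T (S t)
      have h2 : f T ≤ f (S t ∪ T) := hmono T _ Finset.subset_union_right
      have hcard : ((T \ S t).card : ℝ) ≤ (k:ℝ) := by
        have : (T \ S t).card ≤ T.card := Finset.card_le_card Finset.sdiff_subset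
        exact_mod_cast hT ▸ this
      have h5 : ((T \ S t).card : ℝ) * (f (S (t+1)) - f (S t)) ≤
          (k:ℝ) * (f (S (t+1)) - f (S t)) :=
        mul_le_mul_of_nonneg_right hcard hmarg
      have h6 : f T - f (S t) ≤ (k:ℝ) * (f (S (t+1)) - f (S t)) := by linarith
      have h7 : (1/(k:ℝ)) * (f T - f (S t)) ≤
          (1/(k:ℝ)) * ((k:ℝ) * (f (S (t+1)) - f (S t))) :=
        mul_le_mul_of_nonneg_left h6 (by positivity)
      have h8 : (1/(k:ℝ)) * ((k:ℝ) * (f (S (t+1)) - f (S t))) =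
          f (S (t+1)) - f (S t) := by
        field_simp
      have h9 : (1 - 1/(k:ℝ)) * (f T - f (S t)) =
          (f T - f (S t)) - (1/(k:ℝ)) * (f T - f (S t)) := by ring
      linarith
    -- iterate
    have hiter : ∀ t ≤ k, f T - f (S t) ≤ (1 - 1/(k:ℝ))^t * f T := by
      intro t
      induction t with
      | zero => intro _; simp [hS0, hempty]
      | succ t ih =>
        intro ht
        have ht' : t < k := Nat.lt_of_succ_le ht
        have h1 := hstep' t ht'
        have h2 := ih ht'.le
        have h3 : (1 - 1/(k:ℝ)) * (f T - f (S t)) ≤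
            (1 - 1/(k:ℝ)) * ((1 - 1/(k:ℝ))^t * f T) :=
          mul_le_mul_of_nonneg_left h2 hr0
        calc f T - f (S (t+1)) ≤ (1 - 1/(k:ℝ)) * (f T - f (S t)) := h1
          _ ≤ (1 - 1/(k:ℝ)) * ((1 - 1/(k:ℝ))^t * f T) := h3
          _ = (1 - 1/(k:ℝ))^(t+1) * f T := by ring
    have hfin := hiter k le_rfl
    have hexp : (1 - 1/(k:ℝ))^k ≤ (Real.exp 1)⁻¹ := by
      have h1 : 1 - 1/(k:ℝ) ≤ Real.exp (-(1/(k:ℝ))) := by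
        have := Real.add_one_le_exp (-(1/(k:ℝ)))
        linarith
      have h2 : (1 - 1/(k:ℝ))^k ≤ (Real.exp (-(1/(k:ℝ))))^k :=
        pow_le_pow_left₀ hr0 h1 k
      have h3 : (Real.exp (-(1/(k:ℝ))))^k = Real.exp ((k:ℝ) * (-(1/(k:ℝ)))) := by
        rw [← Real.exp_nat_mul]
      have h4 : (k:ℝ) * (-(1/(k:ℝ))) = -1 := by
        field_simp
      rw [h3, h4, Real.exp_neg] at h2
      exact h2
    have hmul : (1 - 1/(k:ℝ))^k * f T ≤ (Real.exp 1)⁻¹ * f T :=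
      mul_le_mul_of_nonneg_right hexp hfT0
    have heq : (1 - (Real.exp 1)⁻¹) * f T = f T - (Real.exp 1)⁻¹ * f T := by ring
    linarith
end

section
/- Let f : 2^{[n]} → ℝ be a monotone submodular set function with f(∅) = 0, let k ∈ ℕ and ε > 0. Suppose O : 2^{[n]} × [n] → ℝ is an oracle satisfying Δ_f(i | S) − ε ≤ O(S, i) ≤ Δ_f(i | S) + ε for every S ⊆ [n] and i ∈ [n] \ S. Consider the algorithm that starts with S_0 = ∅ and at each step t = 1,…,k selects j_t = argmax_{j ∈ [n] \ S_{t-1}} O(S_{t-1}, j) and sets S_t = S_{t-1} ∪ {j_t}. Then the returned set S_k satisfies f(S_k) ≥ (1 − 1/e) · max_{T ⊆ [n], |T| = k} f(T) − k(2 − 1/e)ε. -/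
lemma submod_sum_bound {n : ℕ} (f : Finset (Fin n) → ℝ)
    (hsub : ∀ A B : Finset (Fin n), A ⊆ B → ∀ i : Fin n, i ∉ B →
      f (insert i B) - f B ≤ f (insert i A) - f A) :
    ∀ A B : Finset (Fin n), Disjoint A B →
      f (A ∪ B) - f B ≤ ∑ i ∈ A, (f (insert i B) - f B) := by
  intro A
  induction A using Finset.induction_on with
  | empty => intro B _; simp
  | @insert a A' ha ih =>
    intro B hd
    rw [Finset.disjoint_insert_left] at hd
    obtain ⟨haB, hd'⟩ := hd
    have haAB : a ∉ A' ∪ B := by simp [ha, haB]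
    have h2 := hsub B (A' ∪ B) Finset.subset_union_right a haAB
    have h1 : insert a A' ∪ B = insert a (A' ∪ B) := Finset.insert_union a A' B
    have h3 := ih B hd'
    rw [h1, Finset.sum_insert ha]
    linarith

/-- **Greedy with an ε-approximate marginal-gain oracle.** -/
theorem greedy_submodular_maximization_approximate_oracle
    (n k : ℕ) (ε : ℝ) (hε : 0 < ε) (f : Finset (Fin n) → ℝ)
    (hmono : ∀ A B : Finset (Fin n), A ⊆ B → f A ≤ f B)
    (hsub : ∀ A B : Finset (Fin n), A ⊆ B → ∀ i : Fin n, i ∉ B →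
      f (insert i B) - f B ≤ f (insert i A) - f A)
    (hempty : f ∅ = 0)
    (O : Finset (Fin n) → Fin n → ℝ)
    (hO : ∀ (A : Finset (Fin n)) (i : Fin n), i ∉ A →
      f (insert i A) - f A - ε ≤ O A i ∧ O A i ≤ f (insert i A) - f A + ε)
    (S : ℕ → Finset (Fin n)) (hS0 : S 0 = ∅)
    (hstep : ∀ t < k, ∃ j : Fin n, j ∉ S t ∧ S (t + 1) = insert j (S t) ∧
      ∀ j' : Fin n, j' ∉ S t → O (S t) j' ≤ O (S t) j) :
    ∀ T : Finset (Fin n), T.card = k →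
      (1 - (Real.exp 1)⁻¹) * f T - k * (2 - (Real.exp 1)⁻¹) * ε ≤ f (S k) := by
  intro T hT
  have he1 : (1:ℝ) ≤ Real.exp 1 := by
    have := Real.add_one_le_exp (1:ℝ); linarith
  have hepos : (0:ℝ) < Real.exp 1 := Real.exp_pos 1
  have heinv0 : (0:ℝ) < (Real.exp 1)⁻¹ := by positivity
  have heinv1 : (Real.exp 1)⁻¹ ≤ 1 := by
    rw [inv_le_one_iff₀]; right; exact he1
  have hfT0 : 0 ≤ f T := by
    have := hmono ∅ T (Finset.empty_subset T); linarith [hempty]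
  have hfSk0 : 0 ≤ f (S k) := by
    have := hmono ∅ (S k) (Finset.empty_subset _); linarith [hempty]
  rcases Nat.eq_zero_or_pos k with hk0 | hk
  · subst hk0
    have : T = ∅ := Finset.card_eq_zero.mp hT
    subst this
    rw [hempty]
    push_cast
    nlinarith
  have hk1 : (1:ℝ) ≤ (k:ℝ) := by exact_mod_cast hk
  have hkpos : (0:ℝ) < (k:ℝ) := by linarith
  -- per-step contraction
  have step : ∀ t < k, f T - f (S (t+1)) - 2*k*ε ≤ (1 - 1/k) * (f T - f (S t) - 2*k*ε) := by
    intro t ht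
    obtain ⟨j, hj, hSt1, hmax⟩ := hstep t ht
    set Δ : ℝ := f (insert j (S t)) - f (S t) with hΔ
    have key : f T - f (S t) ≤ k * (Δ + 2*ε) := by
      have h1 : f T ≤ f (T ∪ S t) := hmono _ _ Finset.subset_union_left
      have h2 := submod_sum_bound f hsub (T \ S t) (S t) Finset.sdiff_disjoint
      rw [Finset.sdiff_union_self_eq_union] at h2
      have h3 : ∀ i ∈ T \ S t, f (insert i (S t)) - f (S t) ≤ Δ + 2*ε := by
        intro i hi
        have hiS : i ∉ S t := (Finset.mem_sdiff.mp hi).2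
        obtain ⟨hOi1, hOi2⟩ := hO (S t) i hiS
        obtain ⟨hOj1, hOj2⟩ := hO (S t) j hj
        have := hmax i hiS
        linarith
      have h4 : ∑ i ∈ T \ S t, (f (insert i (S t)) - f (S t))
          ≤ ((T \ S t).card : ℝ) * (Δ + 2*ε) := by
        calc ∑ i ∈ T \ S t, (f (insert i (S t)) - f (S t))
            ≤ ∑ _i ∈ T \ S t, (Δ + 2*ε) := Finset.sum_le_sum h3
          _ = ((T \ S t).card : ℝ) * (Δ + 2*ε) := by
              rw [Finset.sum_const, nsmul_eq_mul]
      have hΔ0 : 0 ≤ Δ := by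
        have := hmono (S t) (insert j (S t)) (Finset.subset_insert _ _)
        linarith
      have hcard : ((T \ S t).card : ℝ) ≤ (k:ℝ) := by
        have : (T \ S t).card ≤ T.card := Finset.card_le_card (Finset.sdiff_subset)
        rw [hT] at this
        exact_mod_cast this
      have h5 : ((T \ S t).card : ℝ) * (Δ + 2*ε) ≤ (k:ℝ) * (Δ + 2*ε) :=
        mul_le_mul_of_nonneg_right hcard (by linarith)
      linarith
    rw [hSt1]
    have h6 : (f T - f (S t) - 2*k*ε) / k ≤ Δ := by
      rw [div_le_iff₀ hkpos]; nlinarith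
    have h7 : (1 - 1/(k:ℝ)) * (f T - f (S t) - 2*k*ε)
        = (f T - f (S t) - 2*k*ε) - (f T - f (S t) - 2*k*ε) / k := by
      field_simp
    rw [h7]
    have : f (insert j (S t)) = f (S t) + Δ := by rw [hΔ]; ring
    rw [this]
    linarith
  -- contraction factor nonneg
  have hr0 : (0:ℝ) ≤ 1 - 1/(k:ℝ) := by
    have : 1/(k:ℝ) ≤ 1 := by rw [div_le_one hkpos]; exact hk1
    linarith
  -- induction
  have hind : ∀ t ≤ k, f T - f (S t) - 2*k*ε ≤ (1 - 1/(k:ℝ))^t * (f T - 2*k*ε) := by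
    intro t
    induction t with
    | zero => intro _; rw [hS0, hempty]; simp
    | succ t ih =>
      intro htk
      have ht : t < k := htk
      have h1 := step t ht
      have h2 := ih (le_of_lt ht)
      calc f T - f (S (t+1)) - 2*k*ε
          ≤ (1 - 1/(k:ℝ)) * (f T - f (S t) - 2*k*ε) := h1
        _ ≤ (1 - 1/(k:ℝ)) * ((1 - 1/(k:ℝ))^t * (f T - 2*k*ε)) :=
            mul_le_mul_of_nonneg_left h2 hr0
        _ = (1 - 1/(k:ℝ))^(t+1) * (f T - 2*k*ε) := by ring
  have hfin := hind k le_rfl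
  -- (1 - 1/k)^k ≤ e⁻¹
  have hpow : (1 - 1/(k:ℝ))^k ≤ (Real.exp 1)⁻¹ := by
    have hx : (1:ℝ) - 1/(k:ℝ) ≤ Real.exp (-(1/(k:ℝ))) := by
      have := Real.add_one_le_exp (-(1/(k:ℝ))); linarith
    have hp : (1 - 1/(k:ℝ))^k ≤ (Real.exp (-(1/(k:ℝ))))^k :=
      pow_le_pow_left₀ hr0 hx k
    have : (Real.exp (-(1/(k:ℝ))))^k = Real.exp (-1) := by
      rw [← Real.exp_nat_mul]
      congr 1
      field_simp
    rw [this, Real.exp_neg] at hp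
    exact hp
  rcases le_or_gt (f T - 2*k*ε) 0 with hneg | hposh
  · nlinarith
  · have h8 : (1 - 1/(k:ℝ))^k * (f T - 2*k*ε) ≤ (Real.exp 1)⁻¹ * (f T - 2*k*ε) :=
      mul_le_mul_of_nonneg_right hpow (le_of_lt hposh)
    nlinarith [mul_nonneg heinv0.le (mul_pos hkpos hε).le]
end

section
/- Fix i ∈ [n], k ∈ ℕ and ε > 0. Suppose that for every S_i ⊆ [n] with |S_i| ≤ k and every X ⊆ S_i ∪ {i} with |X ∩ S_i| ≤ |S_i|, the approximate score function satisfies |(f̃_{S_i,i}(X) − f̃_{S_i,i}(S_i)) − (f_{S_i,i}(X) − f_{S_i,i}(S_i))| ≤ ε/(2n). Let opt_i denote the optimal value achievable using f at step i. If the greedy algorithm run with the exact function f finds a solution of value at least (1 − 1/e) · opt_i, then the greedy algorithm run with the approximate function f̃ finds a solution of value at least (1 − 1/e) · opt_i − ε. -/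
/-- **Robustness of the greedy eviction step to an approximate score function.**
Fix `i ∈ [n]`, `k ∈ ℕ` and `ε > 0`.  Write `f Si X` for the exact score `f_{S_i,i}(X)` and
`ftil Si X` for the approximate score `f̃_{S_i,i}(X)`.  Suppose that for every `S_i` with
`|S_i| ≤ k` and every candidate `X ⊆ S_i ∪ {i}` with `|X ∩ S_i| ≤ |S_i|`,
`|(f̃(X) - f̃(S_i)) - (f(X) - f(S_i))| ≤ ε / (2n)`.
If the greedy choice with respect to the exact `f` (the candidate maximizing `f`) achieves
value at least `(1 - 1/e)·opt_i`, then the greedy choice with respect to `f̃` (the candidate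
maximizing `f̃`) achieves value at least `(1 - 1/e)·opt_i - ε`. -/
theorem approximate_greedy_error_propagation
    (n k : ℕ) (hn : 0 < n) (ε : ℝ) (hε : 0 < ε) (i : Fin n)
    (f ftil : Finset (Fin n) → Finset (Fin n) → ℝ)
    (opt : ℝ)
    (happrox : ∀ Si : Finset (Fin n), Si.card ≤ k →
      ∀ X ⊆ insert i Si, (X ∩ Si).card ≤ Si.card →
        |(ftil Si X - ftil Si Si) - (f Si X - f Si Si)| ≤ ε / (2 * n))
    (Si : Finset (Fin n)) (hSi : Si.card ≤ k)
    (Xexact Xapprox : Finset (Fin n))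
    (hXe : Xexact ⊆ insert i Si)
    (hXemax : ∀ Y ⊆ insert i Si, f Si Y ≤ f Si Xexact)
    (hXeval : (1 - (Real.exp 1)⁻¹) * opt ≤ f Si Xexact)
    (hXa : Xapprox ⊆ insert i Si)
    (hXamax : ∀ Y ⊆ insert i Si, ftil Si Y ≤ ftil Si Xapprox) :
    (1 - (Real.exp 1)⁻¹) * opt - ε ≤ f Si Xapprox := by
  have h1 := happrox Si hSi Xexact hXe (Finset.card_le_card (Finset.inter_subset_right))
  have h2 := happrox Si hSi Xapprox hXa (Finset.card_le_card (Finset.inter_subset_right))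
  have h3 := hXamax Xexact hXe
  have habs1 := abs_le.mp h1
  have habs2 := abs_le.mp h2
  have hne : ε / n ≤ ε := by
    rw [div_le_iff₀ (by exact_mod_cast hn)]
    have : (1:ℝ) ≤ n := by exact_mod_cast hn
    nlinarith
  have h2n : ε / (2 * n) = (ε / n) / 2 := by ring
  linarith
end

section
/- Fix i, k ∈ ℕ and θ, γ ∈ (0,1). Suppose: (Set Condition) S_i ⊆ [i−1]; (Budget Condition) |S_i| ≤ k; (Value Condition) f_{S_{i−1},i−1}(S_i) ≥ (1 − 1/e)(1 − θ)^i (1 − γ)^i · opt_i; (Universal Dynamic Condition 1 for the exact function) f_{S_i,i}(S_i) ≥ (1 − θ) · f_{S_{i−1},i−1}(S_i); (Universal Dynamic Condition 2) opt_i ≥ (1 − γ) · opt_{i+1}; (Universal Monotone Condition for the exact function) f_{S_i,i}(X) ≥ f_{S_i,i}(Y) for all Y ⊆ X. If S_{i+1} is constructed by the exact greedy eviction rule, then: S_{i+1} ⊆ [i]; |S_{i+1}| ≤ k; and f_{S_i,i}(S_{i+1}) ≥ (1 − 1/e)(1 − θ)^{i+1} (1 − γ)^{i+1} · opt_{i+1}.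 -/
/-- **Induction lemma for the exact greedy eviction policy.**
Write `f Z m X` for the dynamic score `f_{Z,m}(X)` and `opt m` for the optimum at step `m`.
Fix `i, k ∈ ℕ`, `θ, γ ∈ (0,1)`.  Under the Set, Budget and Value conditions on `S_i`,
together with Universal Dynamic Conditions 1 and 2 and the Universal Monotone Condition,
if `S_{i+1}` is produced by the exact greedy eviction rule (insert `i` if `|S_i| < k`,
otherwise evict the element `u = argmax_{v ∈ S_i ∪ {i}} f_{S_i,i}((S_i ∪ {i}) \ {v})`),
then `S_{i+1} ⊆ [i]`, `|S_{i+1}| ≤ k`, and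
`f_{S_i,i}(S_{i+1}) ≥ (1 - 1/e)(1-θ)^{i+1}(1-γ)^{i+1}·opt_{i+1}`. -/
theorem induction_lemma_exact
    (k i : ℕ) (hi : 1 ≤ i) (θ γ : ℝ)
    (hθ0 : 0 < θ) (hθ1 : θ < 1) (hγ0 : 0 < γ) (hγ1 : γ < 1)
    (f : Finset ℕ → ℕ → Finset ℕ → ℝ) (opt : ℕ → ℝ)
    (Sprev Si Snext : Finset ℕ)
    -- Set Condition
    (hset : Si ⊆ Finset.Icc 1 (i - 1))
    -- Budget Condition
    (hbudget : Si.card ≤ k)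
    -- Value Condition
    (hvalue : (1 - (Real.exp 1)⁻¹) * (1 - θ) ^ i * (1 - γ) ^ i * opt i ≤ f Sprev (i - 1) Si)
    -- Universal Dynamic Condition 1 (exact function)
    (hdyn1 : (1 - θ) * f Sprev (i - 1) Si ≤ f Si i Si)
    -- Universal Dynamic Condition 2
    (hdyn2 : (1 - γ) * opt (i + 1) ≤ opt i)
    -- Universal Monotone Condition (exact function)
    (hmono : ∀ X Y : Finset ℕ, Y ⊆ X → f Si i Y ≤ f Si i X)
    -- exact greedy eviction rule
    (hconstruct :
      (Si.card < k → Snext = insert i Si) ∧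
      (Si.card = k → ∃ u ∈ insert i Si, Snext = (insert i Si).erase u ∧
        ∀ v ∈ insert i Si,
          f Si i ((insert i Si).erase v) ≤ f Si i ((insert i Si).erase u))) :
    Snext ⊆ Finset.Icc 1 i ∧ Snext.card ≤ k ∧
      (1 - (Real.exp 1)⁻¹) * (1 - θ) ^ (i + 1) * (1 - γ) ^ (i + 1) * opt (i + 1)
        ≤ f Si i Snext := by
  have hiS : i ∉ Si := by
    intro h
    have := hset h
    simp only [Finset.mem_Icc] at this
    omega
  have hsub : Si ⊆ Finset.Icc 1 i := hset.trans (Finset.Icc_subset_Icc_right (by omega))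
  have hsub' : insert i Si ⊆ Finset.Icc 1 i :=
    Finset.insert_subset (Finset.mem_Icc.2 ⟨hi, le_refl i⟩) hsub
  -- main value bound: f Si i Snext ≥ f Si i Si
  have hkey : f Si i Si ≤ f Si i Snext := by
    rcases lt_or_eq_of_le hbudget with hlt | heq
    · rw [hconstruct.1 hlt]
      exact hmono _ _ (Finset.subset_insert i Si)
    · obtain ⟨u, hu, hSn, hmax⟩ := hconstruct.2 heq
      rw [hSn]
      have := hmax i (Finset.mem_insert_self i Si)
      rwa [Finset.erase_insert hiS] at this
  -- structural parts
  have hC : 0 ≤ (1 - (Real.exp 1)⁻¹) * (1 - θ) ^ i * (1 - γ) ^ i := by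
    have h1 : (0:ℝ) ≤ 1 - (Real.exp 1)⁻¹ := by
      have : (Real.exp 1)⁻¹ ≤ 1 := by
        rw [inv_le_one_iff₀]; right; exact Real.one_le_exp (by norm_num)
      linarith
    have h2 : (0:ℝ) ≤ 1 - θ := by linarith
    have h3 : (0:ℝ) ≤ 1 - γ := by linarith
    exact mul_nonneg (mul_nonneg h1 (pow_nonneg h2 i)) (pow_nonneg h3 i)
  refine ⟨?_, ?_, ?_⟩
  · rcases lt_or_eq_of_le hbudget with hlt | heq
    · rw [hconstruct.1 hlt]; exact hsub'
    · obtain ⟨u, hu, hSn, _⟩ := hconstruct.2 heq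
      rw [hSn]; exact (Finset.erase_subset _ _).trans hsub'
  · rcases lt_or_eq_of_le hbudget with hlt | heq
    · rw [hconstruct.1 hlt]
      have := Finset.card_insert_le i Si
      omega
    · obtain ⟨u, hu, hSn, _⟩ := hconstruct.2 heq
      rw [hSn]
      have h1 := Finset.card_erase_of_mem hu
      have h2 := Finset.card_insert_le i Si
      omega
  · have step1 : (1 - (Real.exp 1)⁻¹) * (1 - θ) ^ i * (1 - γ) ^ i * ((1 - γ) * opt (i+1))
        ≤ (1 - (Real.exp 1)⁻¹) * (1 - θ) ^ i * (1 - γ) ^ i * opt i :=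
      mul_le_mul_of_nonneg_left hdyn2 hC
    have step2 : (1 - θ) * ((1 - (Real.exp 1)⁻¹) * (1 - θ) ^ i * (1 - γ) ^ i * opt i)
        ≤ (1 - θ) * f Sprev (i - 1) Si :=
      mul_le_mul_of_nonneg_left hvalue (by linarith)
    calc (1 - (Real.exp 1)⁻¹) * (1 - θ) ^ (i + 1) * (1 - γ) ^ (i + 1) * opt (i + 1)
        = (1 - θ) * ((1 - (Real.exp 1)⁻¹) * (1 - θ) ^ i * (1 - γ) ^ i * ((1 - γ) * opt (i+1))) := by
          ring
      _ ≤ (1 - θ) * ((1 - (Real.exp 1)⁻¹) * (1 - θ) ^ i * (1 - γ) ^ i * opt i) :=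
          mul_le_mul_of_nonneg_left step1 (by linarith)
      _ ≤ (1 - θ) * f Sprev (i - 1) Si := step2
      _ ≤ f Si i Si := hdyn1
      _ ≤ f Si i Snext := hkey
end

section
/- Let A ∈ ℝ^{n×d} with spectral norm ‖A‖ ≤ R, and let x, y ∈ ℝ^d with ‖x‖₂ ≤ R and ‖y‖₂ ≤ R. Setting u(z) := exp(Az) entrywise, we have ‖u(x) − u(y)‖₂ ≤ 2√n · R · exp(R²) · ‖x − y‖₂. -/
private lemma exp_lip_aux (a b c : ℝ) (ha : a ≤ c) (hb : b ≤ c) :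
    |Real.exp a - Real.exp b| ≤ Real.exp c * |a - b| := by
  wlog h : b ≤ a
  · rw [abs_sub_comm (Real.exp a), abs_sub_comm a b]
    exact this b a c hb ha (le_of_not_ge h)
  rw [abs_of_nonneg (sub_nonneg.2 (Real.exp_le_exp.2 h)),
    abs_of_nonneg (sub_nonneg.2 h)]
  have h1 := Real.add_one_le_exp (b - a)
  have h2 : Real.exp b = Real.exp (b - a) * Real.exp a := by
    rw [← Real.exp_add]; ring_nf
  have h3 : Real.exp a ≤ Real.exp c := Real.exp_le_exp.2 ha
  nlinarith [Real.exp_pos a, Real.exp_pos c]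

/-- **Lipschitz bound for `u(z) = exp (A z)` (Part 1 of Lemma 7.2).**
Let `A ∈ ℝ^{n×d}` with spectral norm `‖A‖ ≤ R` (i.e. `‖A v‖₂ ≤ R ‖v‖₂` for all `v`) and
`x, y ∈ ℝ^d` with `‖x‖₂ ≤ R`, `‖y‖₂ ≤ R`.  Then
`‖u x - u y‖₂ ≤ 2 √n · R · exp (R²) · ‖x - y‖₂`. -/
theorem exp_mulVec_lipschitz
    (n d : ℕ) (R : ℝ) (A : Matrix (Fin n) (Fin d) ℝ)
    (hA : ∀ v : Fin d → ℝ,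
      Real.sqrt (∑ j : Fin n, (A.mulVec v j) ^ 2) ≤ R * Real.sqrt (∑ i : Fin d, v i ^ 2))
    (x y : Fin d → ℝ)
    (hx : Real.sqrt (∑ i : Fin d, x i ^ 2) ≤ R)
    (hy : Real.sqrt (∑ i : Fin d, y i ^ 2) ≤ R) :
    Real.sqrt (∑ j : Fin n, (Real.exp (A.mulVec x j) - Real.exp (A.mulVec y j)) ^ 2)
      ≤ 2 * Real.sqrt n * R * Real.exp (R ^ 2) *
          Real.sqrt (∑ i : Fin d, (x i - y i) ^ 2) := by
  have hR : 0 ≤ R := le_trans (Real.sqrt_nonneg _) hx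
  rcases Nat.eq_zero_or_pos n with hn | hn
  · subst hn
    simp only [Finset.univ_eq_empty, Finset.sum_empty, Real.sqrt_zero]
    positivity
  -- each coordinate bound: |A.mulVec v j| ≤ R^2 when ‖v‖ ≤ R
  have coord : ∀ (v : Fin d → ℝ), Real.sqrt (∑ i : Fin d, v i ^ 2) ≤ R →
      ∀ j : Fin n, A.mulVec v j ≤ R ^ 2 := by
    intro v hv j
    have h1 : (A.mulVec v j) ^ 2 ≤ ∑ k : Fin n, (A.mulVec v k) ^ 2 :=
      Finset.single_le_sum (f := fun k => (A.mulVec v k) ^ 2) (fun k _ => sq_nonneg _) (Finset.mem_univ j)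
    have h2 : |A.mulVec v j| ≤ Real.sqrt (∑ k : Fin n, (A.mulVec v k) ^ 2) := by
      rw [← Real.sqrt_sq_eq_abs]
      exact Real.sqrt_le_sqrt h1
    have h3 : Real.sqrt (∑ k : Fin n, (A.mulVec v k) ^ 2) ≤ R * R :=
      le_trans (hA v) (by
        exact mul_le_mul_of_nonneg_left hv hR)
    calc A.mulVec v j ≤ |A.mulVec v j| := le_abs_self _
      _ ≤ R * R := le_trans h2 h3
      _ = R ^ 2 := (sq R).symm
  -- pointwise Lipschitz bound
  have hsum : ∑ j : Fin n, (Real.exp (A.mulVec x j) - Real.exp (A.mulVec y j)) ^ 2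
      ≤ ∑ j : Fin n, (Real.exp (R ^ 2)) ^ 2 * (A.mulVec (x - y) j) ^ 2 := by
    apply Finset.sum_le_sum
    intro j _
    have hl := exp_lip_aux (A.mulVec x j) (A.mulVec y j) (R ^ 2) (coord x hx j) (coord y hy j)
    have hsub : A.mulVec x j - A.mulVec y j = A.mulVec (x - y) j := by
      rw [Matrix.mulVec_sub]; rfl
    have := pow_le_pow_left₀ (abs_nonneg _) hl 2
    rw [sq_abs, mul_pow] at this
    rw [← hsub]
    calc (Real.exp (A.mulVec x j) - Real.exp (A.mulVec y j)) ^ 2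
        ≤ Real.exp (R ^ 2) ^ 2 * |A.mulVec x j - A.mulVec y j| ^ 2 := this
      _ = Real.exp (R ^ 2) ^ 2 * (A.mulVec x j - A.mulVec y j) ^ 2 := by rw [sq_abs]
  have hstep : Real.sqrt (∑ j : Fin n, (Real.exp (A.mulVec x j) - Real.exp (A.mulVec y j)) ^ 2)
      ≤ Real.exp (R ^ 2) * Real.sqrt (∑ j : Fin n, (A.mulVec (x - y) j) ^ 2) := by
    calc Real.sqrt (∑ j : Fin n, (Real.exp (A.mulVec x j) - Real.exp (A.mulVec y j)) ^ 2)
        ≤ Real.sqrt (∑ j : Fin n, (Real.exp (R ^ 2)) ^ 2 * (A.mulVec (x - y) j) ^ 2) :=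
          Real.sqrt_le_sqrt hsum
      _ = Real.sqrt ((Real.exp (R ^ 2)) ^ 2 * ∑ j : Fin n, (A.mulVec (x - y) j) ^ 2) := by
          rw [Finset.mul_sum]
      _ = Real.exp (R ^ 2) * Real.sqrt (∑ j : Fin n, (A.mulVec (x - y) j) ^ 2) := by
          rw [Real.sqrt_mul (sq_nonneg _), Real.sqrt_sq (Real.exp_pos _).le]
  have hAxy := hA (x - y)
  have hxy : ∑ i : Fin d, (x - y) i ^ 2 = ∑ i : Fin d, (x i - y i) ^ 2 := rfl
  rw [hxy] at hAxy
  have hbound : Real.sqrt (∑ j : Fin n, (Real.exp (A.mulVec x j) - Real.exp (A.mulVec y j)) ^ 2)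
      ≤ Real.exp (R ^ 2) * (R * Real.sqrt (∑ i : Fin d, (x i - y i) ^ 2)) :=
    le_trans hstep (mul_le_mul_of_nonneg_left hAxy (Real.exp_pos _).le)
  have hn1 : (1 : ℝ) ≤ Real.sqrt n := by
    rw [show (1:ℝ) = Real.sqrt 1 by simp]
    exact Real.sqrt_le_sqrt (by exact_mod_cast hn)
  have hs : 0 ≤ Real.sqrt (∑ i : Fin d, (x i - y i) ^ 2) := Real.sqrt_nonneg _
  nlinarith [Real.exp_pos (R ^ 2), mul_nonneg (mul_nonneg hR (Real.exp_pos (R^2)).le) hs]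
end

section
/- Let A ∈ ℝ^{n×d} with spectral norm ‖A‖ ≤ R, and let x, y ∈ ℝ^d with ‖x‖₂ ≤ R and ‖y‖₂ ≤ R. Setting u(z) := exp(Az) entrywise, the sparse-penalty part of the Hessian satisfies the Lipschitz bound ‖Aᵀ diag(u(x)) A − Aᵀ diag(u(y)) A‖ ≤ 2√n · R³ · exp(R²) · ‖x − y‖₂, where ‖·‖ on matrices denotes the spectral norm. -/
open Matrix Real Finset

private noncomputable def nrm {m : ℕ} (v : Fin m → ℝ) : ℝ :=
  Real.sqrt (∑ i, v i ^ 2)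

private lemma nrm_nonneg {m : ℕ} (v : Fin m → ℝ) : 0 ≤ nrm v := Real.sqrt_nonneg _

private lemma nrm_sq {m : ℕ} (v : Fin m → ℝ) : nrm v ^ 2 = ∑ i, v i ^ 2 :=
  Real.sq_sqrt (Finset.sum_nonneg fun i _ => sq_nonneg _)

private lemma abs_le_nrm {m : ℕ} (v : Fin m → ℝ) (j : Fin m) : |v j| ≤ nrm v := by
  rw [← Real.sqrt_sq_eq_abs]
  exact Real.sqrt_le_sqrt
    (Finset.single_le_sum (fun i _ => sq_nonneg (v i)) (Finset.mem_univ j))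

private lemma cauchy {m : ℕ} (v w : Fin m → ℝ) : v ⬝ᵥ w ≤ nrm v * nrm w := by
  have h := Finset.sum_mul_sq_le_sq_mul_sq Finset.univ v w
  have h2 : v ⬝ᵥ w ≤ |v ⬝ᵥ w| := le_abs_self _
  have h3 : |v ⬝ᵥ w| = Real.sqrt ((∑ i, v i * w i) ^ 2) := by
    rw [Real.sqrt_sq_eq_abs]; rfl
  calc v ⬝ᵥ w ≤ Real.sqrt ((∑ i, v i * w i) ^ 2) := by rw [← h3]; exact h2
    _ ≤ Real.sqrt ((∑ i, v i ^ 2) * ∑ i, w i ^ 2) := Real.sqrt_le_sqrt h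
    _ = nrm v * nrm w := by
        rw [Real.sqrt_mul (Finset.sum_nonneg fun i _ => sq_nonneg _)]; rfl

private lemma transpose_bound {n d : ℕ} {R : ℝ} (hR : 0 ≤ R)
    (A : Matrix (Fin n) (Fin d) ℝ)
    (hA : ∀ v, nrm (A.mulVec v) ≤ R * nrm v) (w : Fin n → ℝ) :
    nrm (A.transpose.mulVec w) ≤ R * nrm w := by
  set u := A.transpose.mulVec w with hu
  have key : nrm u ^ 2 ≤ nrm w * (R * nrm u) := by
    have h1 : nrm u ^ 2 = w ⬝ᵥ A.mulVec u := by
      rw [nrm_sq, Matrix.dotProduct_mulVec, ← Matrix.mulVec_transpose, ← hu]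
      simp [dotProduct, sq]
    calc nrm u ^ 2 = w ⬝ᵥ A.mulVec u := h1
      _ ≤ nrm w * nrm (A.mulVec u) := cauchy _ _
      _ ≤ nrm w * (R * nrm u) :=
          mul_le_mul_of_nonneg_left (hA u) (nrm_nonneg w)
  rcases eq_or_lt_of_le (nrm_nonneg u) with h | h
  · rw [← h]; exact mul_nonneg hR (nrm_nonneg w)
  · nlinarith [key]

private lemma exp_lip {K a b : ℝ} (ha : a ≤ K) (hb : b ≤ K) :
    |Real.exp a - Real.exp b| ≤ Real.exp K * |a - b| := by
  have main : ∀ p q : ℝ, q ≤ p → p ≤ K →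
      Real.exp p - Real.exp q ≤ Real.exp K * (p - q) := by
    intro p q hpq hpK
    have h1 : q - p + 1 ≤ Real.exp (q - p) := Real.add_one_le_exp _
    have h2 : Real.exp (q - p) * Real.exp p = Real.exp q := by
      rw [← Real.exp_add]; ring_nf
    have h3 : Real.exp p ≤ Real.exp K := Real.exp_le_exp.2 hpK
    nlinarith [Real.exp_pos p, Real.exp_pos q]
  rcases le_total b a with h | h
  · rw [abs_of_nonneg (sub_nonneg.2 (Real.exp_le_exp.2 h)),
      abs_of_nonneg (sub_nonneg.2 h)]
    exact main a b h ha
  · rw [abs_of_nonpos (sub_nonpos.2 (Real.exp_le_exp.2 h)),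
      abs_of_nonpos (sub_nonpos.2 h)]
    have := main b a h hb
    linarith

/-- **Lipschitz bound for the Hessian of the sparsity penalty.**
Let `A ∈ ℝ^{n×d}` with spectral norm `‖A‖ ≤ R` (i.e. `‖A v‖₂ ≤ R ‖v‖₂` for all `v`) and
`x, y ∈ ℝ^d` with `‖x‖₂ ≤ R`, `‖y‖₂ ≤ R`.  With `u z := exp (A z)` entrywise, the
Hessian `Aᵀ diag(u z) A` of `L_sparse(z) := ⟨exp (A z), 1_n⟩` satisfies the spectral-norm
Lipschitz bound
`‖Aᵀ diag(u x) A - Aᵀ diag(u y) A‖ ≤ 2 √n · R³ · exp (R²) · ‖x - y‖₂`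
(the spectral norm bound being expressed by the action on every vector `v`). -/
theorem hessian_sparse_lipschitz
    (n d : ℕ) (R : ℝ) (A : Matrix (Fin n) (Fin d) ℝ)
    (hA : ∀ v : Fin d → ℝ,
      Real.sqrt (∑ j : Fin n, (A.mulVec v j) ^ 2) ≤ R * Real.sqrt (∑ i : Fin d, v i ^ 2))
    (x y : Fin d → ℝ)
    (hx : Real.sqrt (∑ i : Fin d, x i ^ 2) ≤ R)
    (hy : Real.sqrt (∑ i : Fin d, y i ^ 2) ≤ R) :
    ∀ v : Fin d → ℝ,
      Real.sqrt (∑ i : Fin d,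
        (((A.transpose * Matrix.diagonal (fun j : Fin n => Real.exp (A.mulVec x j)) * A
          - A.transpose * Matrix.diagonal (fun j : Fin n => Real.exp (A.mulVec y j)) * A)
            ).mulVec v i) ^ 2)
        ≤ 2 * Real.sqrt n * R ^ 3 * Real.exp (R ^ 2) *
            Real.sqrt (∑ i : Fin d, (x i - y i) ^ 2) *
            Real.sqrt (∑ i : Fin d, v i ^ 2) := by
  intro v
  have hR : 0 ≤ R := le_trans (Real.sqrt_nonneg _) hx
  have hA' : ∀ v, nrm (A.mulVec v) ≤ R * nrm v := hA
  set δ : Fin n → ℝ := fun j => Real.exp (A.mulVec x j) - Real.exp (A.mulVec y j) with hδ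
  set w : Fin n → ℝ := A.mulVec v with hw
  -- rewrite the LHS vector
  have hmat : (A.transpose * Matrix.diagonal (fun j : Fin n => Real.exp (A.mulVec x j)) * A
          - A.transpose * Matrix.diagonal (fun j : Fin n => Real.exp (A.mulVec y j)) * A)
      = A.transpose * Matrix.diagonal δ * A := by
    rw [hδ, ← Matrix.diagonal_sub, Matrix.mul_sub, Matrix.sub_mul]
  have hvec : ∀ i, ((A.transpose * Matrix.diagonal δ * A).mulVec v) i
      = (A.transpose.mulVec ((Matrix.diagonal δ).mulVec w)) i := by
    intro i
    rw [hw, Matrix.mulVec_mulVec, Matrix.mulVec_mulVec]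
  -- constant C bounding |δ j|
  set C : ℝ := R * Real.exp (R ^ 2) * nrm (fun i => x i - y i) with hC
  have hC0 : 0 ≤ C := by
    apply mul_nonneg (mul_nonneg hR (Real.exp_pos _).le) (nrm_nonneg _)
  have hδle : ∀ j, |δ j| ≤ C := by
    intro j
    have hax : A.mulVec x j ≤ R ^ 2 := by
      calc A.mulVec x j ≤ |A.mulVec x j| := le_abs_self _
        _ ≤ nrm (A.mulVec x) := abs_le_nrm _ j
        _ ≤ R * nrm x := hA' x
        _ ≤ R * R := mul_le_mul_of_nonneg_left hx hR
        _ = R ^ 2 := (sq R).symm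
    have hay : A.mulVec y j ≤ R ^ 2 := by
      calc A.mulVec y j ≤ |A.mulVec y j| := le_abs_self _
        _ ≤ nrm (A.mulVec y) := abs_le_nrm _ j
        _ ≤ R * nrm y := hA' y
        _ ≤ R * R := mul_le_mul_of_nonneg_left hy hR
        _ = R ^ 2 := (sq R).symm
    have hsub : A.mulVec x j - A.mulVec y j = A.mulVec (fun i => x i - y i) j := by
      have := Matrix.mulVec_sub A x y
      have h2 : A.mulVec (x - y) j = A.mulVec x j - A.mulVec y j := by
        rw [this]; rfl
      rw [← h2]; congr 1
    have habs : |A.mulVec x j - A.mulVec y j| ≤ R * nrm (fun i => x i - y i) := by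
      rw [hsub]
      calc |A.mulVec (fun i => x i - y i) j| ≤ nrm (A.mulVec (fun i => x i - y i)) :=
            abs_le_nrm _ j
        _ ≤ R * nrm (fun i => x i - y i) := hA' _
    calc |δ j| ≤ Real.exp (R ^ 2) * |A.mulVec x j - A.mulVec y j| := exp_lip hax hay
      _ ≤ Real.exp (R ^ 2) * (R * nrm (fun i => x i - y i)) :=
          mul_le_mul_of_nonneg_left habs (Real.exp_pos _).le
      _ = C := by rw [hC]; ring
  -- bound on the diagonal action
  have hDw : nrm ((Matrix.diagonal δ).mulVec w) ≤ C * nrm w := by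
    have h1 : ∑ j, ((Matrix.diagonal δ).mulVec w j) ^ 2 ≤ C ^ 2 * ∑ j, w j ^ 2 := by
      rw [Finset.mul_sum]
      apply Finset.sum_le_sum
      intro j _
      rw [Matrix.mulVec_diagonal]
      have : (δ j) ^ 2 ≤ C ^ 2 := by
        have := hδle j
        nlinarith [abs_nonneg (δ j), sq_abs (δ j)]
      calc (δ j * w j) ^ 2 = (δ j) ^ 2 * (w j) ^ 2 := by ring
        _ ≤ C ^ 2 * (w j) ^ 2 := mul_le_mul_of_nonneg_right this (sq_nonneg _)
    calc nrm ((Matrix.diagonal δ).mulVec w)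
        = Real.sqrt (∑ j, ((Matrix.diagonal δ).mulVec w j) ^ 2) := rfl
      _ ≤ Real.sqrt (C ^ 2 * ∑ j, w j ^ 2) := Real.sqrt_le_sqrt h1
      _ = C * nrm w := by
          rw [Real.sqrt_mul (sq_nonneg _), Real.sqrt_sq hC0]; rfl
  -- total bound
  have total : nrm ((A.transpose * Matrix.diagonal δ * A).mulVec v)
      ≤ R ^ 2 * C * nrm v := by
    have he : nrm ((A.transpose * Matrix.diagonal δ * A).mulVec v)
        = nrm (A.transpose.mulVec ((Matrix.diagonal δ).mulVec w)) := by
      unfold nrm; congr 1; exact Finset.sum_congr rfl fun i _ => by rw [hvec i]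
    rw [he]
    calc nrm (A.transpose.mulVec ((Matrix.diagonal δ).mulVec w))
        ≤ R * nrm ((Matrix.diagonal δ).mulVec w) := transpose_bound hR A hA' _
      _ ≤ R * (C * nrm w) := mul_le_mul_of_nonneg_left hDw hR
      _ ≤ R * (C * (R * nrm v)) := by
          apply mul_le_mul_of_nonneg_left _ hR
          exact mul_le_mul_of_nonneg_left (hA' v) hC0
      _ = R ^ 2 * C * nrm v := by ring
  rcases Nat.eq_zero_or_pos n with hn | hn
  · subst hn
    have hz : ∀ i, ((A.transpose * Matrix.diagonal (fun j : Fin 0 => Real.exp (A.mulVec x j)) * A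
          - A.transpose * Matrix.diagonal (fun j : Fin 0 => Real.exp (A.mulVec y j)) * A)
            ).mulVec v i = 0 := by
      intro i
      simp [Matrix.mulVec, Matrix.mul_apply, dotProduct]
    have : ∑ i : Fin d,
        (((A.transpose * Matrix.diagonal (fun j : Fin 0 => Real.exp (A.mulVec x j)) * A
          - A.transpose * Matrix.diagonal (fun j : Fin 0 => Real.exp (A.mulVec y j)) * A)
            ).mulVec v i) ^ 2 = 0 := by
      apply Finset.sum_eq_zero; intro i _; rw [hz i]; ring
    rw [this, Real.sqrt_zero]
    simp only [Nat.cast_zero, Real.sqrt_zero]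
    have h1 : (0:ℝ) ≤ Real.sqrt (∑ i : Fin d, (x i - y i) ^ 2) := Real.sqrt_nonneg _
    have h2 : (0:ℝ) ≤ Real.sqrt (∑ i : Fin d, v i ^ 2) := Real.sqrt_nonneg _
    nlinarith
  · have hn1 : (1:ℝ) ≤ Real.sqrt n := by
      rw [show (1:ℝ) = Real.sqrt 1 by rw [Real.sqrt_one]]
      exact Real.sqrt_le_sqrt (by exact_mod_cast Nat.one_le_cast.2 hn)
    have hfin : R ^ 2 * C * nrm v ≤ 2 * Real.sqrt n * R ^ 3 * Real.exp (R ^ 2) *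
        nrm (fun i => x i - y i) * nrm v := by
      have hbase : R ^ 2 * C = R ^ 3 * Real.exp (R ^ 2) * nrm (fun i => x i - y i) := by
        rw [hC]; ring
      rw [hbase]
      have hpos : (0:ℝ) ≤ R ^ 3 * Real.exp (R ^ 2) * nrm (fun i => x i - y i) * nrm v := by
        apply mul_nonneg (mul_nonneg (mul_nonneg (by positivity) (Real.exp_pos _).le)
          (nrm_nonneg _)) (nrm_nonneg _)
      nlinarith
    calc Real.sqrt (∑ i : Fin d,
        (((A.transpose * Matrix.diagonal (fun j : Fin n => Real.exp (A.mulVec x j)) * A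
          - A.transpose * Matrix.diagonal (fun j : Fin n => Real.exp (A.mulVec y j)) * A)
            ).mulVec v i) ^ 2)
        = nrm ((A.transpose * Matrix.diagonal δ * A).mulVec v) := by rw [← hmat]; rfl
      _ ≤ R ^ 2 * C * nrm v := total
      _ ≤ 2 * Real.sqrt n * R ^ 3 * Real.exp (R ^ 2) *
            nrm (fun i => x i - y i) * nrm v := hfin
      _ = 2 * Real.sqrt n * R ^ 3 * Real.exp (R ^ 2) *
            Real.sqrt (∑ i : Fin d, (x i - y i) ^ 2) *
            Real.sqrt (∑ i : Fin d, v i ^ 2) := rfl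
end

section
/- Let A ∈ ℝ^{n×d} have smallest singular value σ_min(A) > 0, let l > 0, and let w ∈ ℝ^n satisfy w_i² ≥ l/σ_min(A)² for every i ∈ [n]. Then for every x ∈ ℝ^d, with u(x) := exp(Ax) entrywise and W := diag(w), the matrix Aᵀ (diag(u(x)) + W²) A is positive definite with Aᵀ (diag(u(x)) + W²) A ⪰ l · I_d. -/
open scoped Matrix


/-- **Positive definiteness of the Hessian `Aᵀ (diag(u x) + W²) A` (Part 1 of Lemma on
Hessian PD).**  Let `A ∈ ℝ^{n×d}` with smallest singular value `σ_min(A) = σ > 0` (so that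
`σ ‖v‖₂ ≤ ‖A v‖₂` for all `v`), let `l > 0`, and let `w ∈ ℝ^n` satisfy
`w_i² ≥ l / σ_min(A)²` for every `i`.  Then for every `x ∈ ℝ^d`, with
`u x := exp (A x)` entrywise and `W := diag w`, the matrix `Aᵀ (diag(u x) + W²) A` is
positive definite and `Aᵀ (diag(u x) + W²) A ⪰ l · I_d`. -/
theorem hessian_positive_definite
    (n d : ℕ) (A : Matrix (Fin n) (Fin d) ℝ) (l : ℝ) (hl : 0 < l)
    (σ : ℝ) (hσ : 0 < σ)
    (hσmin : ∀ v : Fin d → ℝ,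
      σ * Real.sqrt (∑ i : Fin d, v i ^ 2)
        ≤ Real.sqrt (∑ j : Fin n, (A.mulVec v j) ^ 2))
    (w : Fin n → ℝ) (hw : ∀ i : Fin n, l / σ ^ 2 ≤ w i ^ 2)
    (x : Fin d → ℝ) :
    (A.transpose *
      (Matrix.diagonal (fun j : Fin n => Real.exp (A.mulVec x j))
        + Matrix.diagonal (fun j : Fin n => w j ^ 2)) * A).PosDef ∧
    (A.transpose *
      (Matrix.diagonal (fun j : Fin n => Real.exp (A.mulVec x j))
        + Matrix.diagonal (fun j : Fin n => w j ^ 2)) * A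
      - l • (1 : Matrix (Fin d) (Fin d) ℝ)).PosSemidef := by
  set B : Matrix (Fin n) (Fin n) ℝ :=
    Matrix.diagonal (fun j : Fin n => Real.exp (A.mulVec x j))
      + Matrix.diagonal (fun j : Fin n => w j ^ 2) with hB
  have hBherm : B.IsHermitian := by
    rw [hB]
    exact (Matrix.isHermitian_diagonal _).add (Matrix.isHermitian_diagonal _)
  have hMherm : (A.transpose * B * A).IsHermitian := by
    have := Matrix.isHermitian_conjTranspose_mul_mul A hBherm
    simpa using this
  -- quadratic form computation
  have hquad : ∀ v : Fin d → ℝ,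
      v ⬝ᵥ (A.transpose * B * A) *ᵥ v
        = ∑ j : Fin n, (Real.exp (A.mulVec x j) + w j ^ 2) * (A.mulVec v j) ^ 2 := by
    intro v
    have h1 : (A.transpose * B * A) *ᵥ v = A.transpose *ᵥ (B *ᵥ (A *ᵥ v)) := by
      rw [Matrix.mul_assoc, ← Matrix.mulVec_mulVec, ← Matrix.mulVec_mulVec]
    rw [h1, Matrix.dotProduct_mulVec, Matrix.vecMul_transpose]
    rw [hB]
    simp [dotProduct, Matrix.add_mulVec, Matrix.mulVec_diagonal]
    refine Finset.sum_congr rfl fun j _ => by ring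
  -- norm inequality, squared
  have hnorm : ∀ v : Fin d → ℝ,
      σ ^ 2 * ∑ i : Fin d, v i ^ 2 ≤ ∑ j : Fin n, (A.mulVec v j) ^ 2 := by
    intro v
    have hS : (0:ℝ) ≤ ∑ i : Fin d, v i ^ 2 := Finset.sum_nonneg fun i _ => sq_nonneg _
    have hT : (0:ℝ) ≤ ∑ j : Fin n, (A.mulVec v j) ^ 2 :=
      Finset.sum_nonneg fun j _ => sq_nonneg _
    have h := hσmin v
    have hsq := mul_self_le_mul_self (by positivity) h
    calc σ ^ 2 * ∑ i : Fin d, v i ^ 2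
        = (σ * Real.sqrt (∑ i : Fin d, v i ^ 2)) *
            (σ * Real.sqrt (∑ i : Fin d, v i ^ 2)) := by
          rw [mul_mul_mul_comm, Real.mul_self_sqrt hS]; ring
      _ ≤ Real.sqrt (∑ j : Fin n, (A.mulVec v j) ^ 2) *
            Real.sqrt (∑ j : Fin n, (A.mulVec v j) ^ 2) := hsq
      _ = ∑ j : Fin n, (A.mulVec v j) ^ 2 := Real.mul_self_sqrt hT
  -- the key lower bound
  have hkey : ∀ v : Fin d → ℝ,
      l * ∑ i : Fin d, v i ^ 2 ≤ v ⬝ᵥ (A.transpose * B * A) *ᵥ v := by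
    intro v
    rw [hquad v]
    have step1 : ∑ j : Fin n, (l / σ ^ 2) * (A.mulVec v j) ^ 2
        ≤ ∑ j : Fin n, (Real.exp (A.mulVec x j) + w j ^ 2) * (A.mulVec v j) ^ 2 := by
      refine Finset.sum_le_sum fun j _ => ?_
      refine mul_le_mul_of_nonneg_right ?_ (sq_nonneg _)
      have := hw j
      have := (Real.exp_pos (A.mulVec x j)).le
      linarith
    have step2 : l * ∑ i : Fin d, v i ^ 2
        ≤ ∑ j : Fin n, (l / σ ^ 2) * (A.mulVec v j) ^ 2 := by
      rw [← Finset.mul_sum]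
      have h2 := hnorm v
      have hσ2 : (0:ℝ) < σ ^ 2 := by positivity
      rw [div_mul_eq_mul_div, le_div_iff₀ hσ2]
      calc l * (∑ i : Fin d, v i ^ 2) * σ ^ 2
          = l * (σ ^ 2 * ∑ i : Fin d, v i ^ 2) := by ring
        _ ≤ l * ∑ j : Fin n, (A.mulVec v j) ^ 2 :=
            mul_le_mul_of_nonneg_left h2 hl.le
    linarith
  constructor
  · refine Matrix.posDef_iff_dotProduct_mulVec.mpr ⟨hMherm, fun v hv => ?_⟩
    have hvpos : 0 < ∑ i : Fin d, v i ^ 2 := by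
      obtain ⟨i, hi⟩ := Function.ne_iff.mp hv
      exact Finset.sum_pos' (fun i _ => sq_nonneg _)
        ⟨i, Finset.mem_univ i, pow_two_pos_of_ne_zero hi⟩
    have hk := hkey v
    have : 0 < v ⬝ᵥ (A.transpose * B * A) *ᵥ v :=
      lt_of_lt_of_le (mul_pos hl hvpos) hk
    simpa using this
  · refine Matrix.posSemidef_iff_dotProduct_mulVec.mpr ⟨?_, fun v => ?_⟩
    · exact hMherm.sub (by simp [Matrix.IsHermitian])
    · have hq : v ⬝ᵥ ((A.transpose * B * A) - l • (1 : Matrix (Fin d) (Fin d) ℝ)) *ᵥ v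
          = v ⬝ᵥ (A.transpose * B * A) *ᵥ v - l * ∑ i : Fin d, v i ^ 2 := by
        rw [Matrix.sub_mulVec, dotProduct_sub]
        congr 1
        simp only [Matrix.smul_mulVec, Matrix.one_mulVec, dotProduct_smul,
          dotProduct, smul_eq_mul, Finset.mul_sum, sq]
        exact Finset.sum_congr rfl fun i _ => by simp [smul_eq_mul]; ring
      have := hkey v
      simp only [star_trivial]
      rw [hq]
      linarith
end
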